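/- arXiv:1403.1751 — 4 statements merged into one kernel-verified Lean document; each statement's English description precedes it below -/
import Mathlib

section
/- Let E be a finite nonempty set and Q : E × E → ℝ an intensity matrix, i.e. Q(y₁,y₂) ≥ 0 whenever y₁ ≠ y₂ and Σ_{y₂∈E} Q(y₁,y₂) = 0 for every y₁ ∈ E. Assume μ : E → ℝ is a probability vector (μ(y) ≥ 0 for all y and Σ_{y∈E} μ(y) = 1) satisfying Σ_{y₁∈E} μ(y₁)·Q(y₁,y₂) = 0 for all y₂ ∈ E, and that μ is the unique probability vector with this property. Then for every g : E → ℝ with Σ_{y∈E} μ(y)·g(y) = 0 there exists a unique f : E → ℝ such that Σ_{y₂∈E} Q(y₁,y₂)·f(y₂) = g(y₁) for all y₁ ∈ E and Σ_{y∈E} μ(y)·f(y) = 0. -/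
/-!
The bordered matrix `A = Q + 1 μᵀ` is invertible. A left null vector `ν` of `A` satisfies
`ν ⬝ 1 = 0` (test against `1`, using `Q 1 = 0` and `μ ⬝ 1 = 1`), hence `ν Q = 0`. Every signed
stationary vector is a multiple of `μ`, because `|ν|` and `|ν| + ν` are again stationary and
nonnegative; so `ν = 0`. When `μ ⬝ g = 0`, the centred solutions of `Q f = g` are exactly the
solutions of `A f = g`.
-/

open Finset Matrix

section IntensityMatrix

variable {E : Type*} [Fintype E] {Q : Matrix E E ℝ}

theorem vecMul_abs_nonneg_of_vecMul_eq_zero (hQoff : ∀ i j, i ≠ j → 0 ≤ Q i j)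
    {ν : E → ℝ} (hν : ν ᵥ* Q = 0) : 0 ≤ |ν| ᵥ* Q := by
  intro j
  -- Comparing `|ν|` with `sign (ν j) • ν` costs nothing on the diagonal entry `Q j j`,
  -- the only entry that may be negative.
  have hcompare : 0 ≤ ∑ i, (|ν i| - SignType.sign (ν j) * ν i) * Q i j := by
    refine sum_nonneg fun i _ => ?_
    rcases eq_or_ne i j with rfl | hij
    · simp [sign_mul_self]
    · refine mul_nonneg (sub_nonneg.2 ?_) (hQoff i j hij)
      calc (SignType.sign (ν j) : ℝ) * ν i ≤ |(SignType.sign (ν j) : ℝ) * ν i| := le_abs_self _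
        _ ≤ |ν i| := by
          rw [abs_mul]
          refine mul_le_of_le_one_left (abs_nonneg _) ?_
          rcases SignType.sign (ν j) with _ | _ | _ <;> simp
  have hνj : ∑ i, ν i * Q i j = 0 := congrFun hν j
  simp only [sub_mul, sum_sub_distrib, mul_assoc, ← mul_sum, hνj, mul_zero, sub_zero] at hcompare
  exact hcompare

theorem vecMul_abs_eq_zero_of_vecMul_eq_zero (hQoff : ∀ i j, i ≠ j → 0 ≤ Q i j)
    (hQrow : Q *ᵥ 1 = 0) {ν : E → ℝ} (hν : ν ᵥ* Q = 0) : |ν| ᵥ* Q = 0 := by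
  have hnonneg := vecMul_abs_nonneg_of_vecMul_eq_zero hQoff hν
  have hsum : ∑ j, (|ν| ᵥ* Q) j = 0 := by
    rw [← dotProduct_one, ← dotProduct_mulVec, hQrow, dotProduct_zero]
  funext j
  exact (sum_eq_zero_iff_of_nonneg fun j _ => hnonneg j).1 hsum j (mem_univ j)

variable {μ : E → ℝ}

theorem eq_sum_smul_of_nonneg_of_vecMul_eq_zero
    (hμ : ∀ w : E → ℝ, 0 ≤ w → ∑ i, w i = 1 → w ᵥ* Q = 0 → w = μ)
    {w : E → ℝ} (hw : 0 ≤ w) (hwQ : w ᵥ* Q = 0) :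
    w = (∑ i, w i) • μ := by
  rcases (sum_nonneg fun i _ => hw i).eq_or_lt with hsum | hsum
  · have hzero : w = 0 := funext fun i =>
      (sum_eq_zero_iff_of_nonneg fun i _ => hw i).1 hsum.symm i (mem_univ i)
    simp [hzero]
  · have hnormalized := hμ ((∑ i, w i)⁻¹ • w) (smul_nonneg (inv_nonneg.2 hsum.le) hw)
      (by simp [← mul_sum, inv_mul_cancel₀ hsum.ne']) (by rw [smul_vecMul, hwQ, smul_zero])
    rw [← hnormalized, smul_smul, mul_inv_cancel₀ hsum.ne', one_smul]

theorem exists_eq_smul_of_vecMul_eq_zero (hQoff : ∀ i j, i ≠ j → 0 ≤ Q i j)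
    (hQrow : Q *ᵥ 1 = 0) (hμ : ∀ w : E → ℝ, 0 ≤ w → ∑ i, w i = 1 → w ᵥ* Q = 0 → w = μ)
    {ν : E → ℝ} (hν : ν ᵥ* Q = 0) : ∃ c : ℝ, ν = c • μ := by
  have habs : |ν| ᵥ* Q = 0 := vecMul_abs_eq_zero_of_vecMul_eq_zero hQoff hQrow hν
  have habs_add : (|ν| + ν) ᵥ* Q = 0 := by rw [add_vecMul, habs, hν, add_zero]
  have hpos : 0 ≤ |ν| + ν := fun i => neg_le_iff_add_nonneg'.1 (neg_abs_le (ν i))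
  refine ⟨(∑ i, (|ν| + ν) i) - ∑ i, |ν| i, ?_⟩
  rw [sub_smul, ← eq_sum_smul_of_nonneg_of_vecMul_eq_zero hμ hpos habs_add,
    ← eq_sum_smul_of_nonneg_of_vecMul_eq_zero hμ (abs_nonneg ν) habs, add_sub_cancel_left]

theorem isUnit_add_vecMulVec_one [DecidableEq E] (hQrow : Q *ᵥ 1 = 0) (hμsum : ∑ i, μ i = 1)
    (hker : ∀ ν : E → ℝ, ν ᵥ* Q = 0 → ∃ c : ℝ, ν = c • μ) :
    IsUnit (Q + vecMulVec 1 μ) := by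
  rw [← vecMul_injective_iff_isUnit, ← coe_vecMulLinear, injective_iff_map_eq_zero]
  intro ν hν
  simp only [coe_vecMulLinear, vecMul_add, vecMul_vecMulVec] at hν
  have hsum : ν ⬝ᵥ 1 = 0 := by
    have h := congrArg (· ⬝ᵥ (1 : E → ℝ)) hν
    simp only [add_dotProduct, ← dotProduct_mulVec, hQrow, dotProduct_zero, zero_add,
      smul_dotProduct, zero_dotProduct] at h
    rwa [dotProduct_one μ, hμsum, smul_eq_mul, mul_one] at h
  obtain ⟨c, rfl⟩ := hker ν (by rwa [hsum, zero_smul, add_zero] at hν)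
  rw [smul_dotProduct, dotProduct_one, hμsum, smul_eq_mul, mul_one] at hsum
  rw [hsum, zero_smul]

theorem poisson_iff_mulVec_add_vecMulVec_eq (hμQ : μ ᵥ* Q = 0) (hμsum : ∑ i, μ i = 1)
    {f g : E → ℝ} (hg : μ ⬝ᵥ g = 0) :
    (Q *ᵥ f = g ∧ μ ⬝ᵥ f = 0) ↔ (Q + vecMulVec 1 μ) *ᵥ f = g := by
  rw [add_mulVec, vecMulVec_mulVec, op_smul_eq_smul]
  refine ⟨fun ⟨hf, hcenter⟩ => by rw [hf, hcenter, zero_smul, add_zero], fun h => ?_⟩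
  have hcenter : μ ⬝ᵥ f = 0 := by
    simpa [← h, dotProduct_add, dotProduct_mulVec, hμQ, dotProduct_smul, dotProduct_one, hμsum]
      using hg
  exact ⟨by simpa [hcenter] using h, hcenter⟩

end IntensityMatrix

theorem poisson_equation_well_posed_general
    {E : Type*} [Fintype E]
    (Q : E → E → ℝ)
    (hQoff : ∀ y₁ y₂, y₁ ≠ y₂ → 0 ≤ Q y₁ y₂)
    (hQrow : ∀ y₁, ∑ y₂, Q y₁ y₂ = 0)
    (μ : E → ℝ)
    (hμsum : ∑ y, μ y = 1)
    (hμstat : ∀ y₂, ∑ y₁, μ y₁ * Q y₁ y₂ = 0)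
    (hμuniq : ∀ μ' : E → ℝ, (∀ y, 0 ≤ μ' y) → (∑ y, μ' y = 1) →
      (∀ y₂, ∑ y₁, μ' y₁ * Q y₁ y₂ = 0) → μ' = μ) :
    ∀ g : E → ℝ, (∑ y, μ y * g y = 0) →
      ∃! f : E → ℝ, (∀ y₁, ∑ y₂, Q y₁ y₂ * f y₂ = g y₁) ∧ ∑ y, μ y * f y = 0 := by
  classical
  have hQrow' : of Q *ᵥ 1 = 0 := funext fun i => by
    simpa [mulVec, dotProduct] using hQrow i
  have hker (ν : E → ℝ) (hν : ν ᵥ* of Q = 0) : ∃ c : ℝ, ν = c • μ :=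
    exists_eq_smul_of_vecMul_eq_zero hQoff hQrow'
      (fun w hw hsum hwQ => hμuniq w hw hsum (congrFun hwQ)) hν
  have hunit := isUnit_add_vecMulVec_one hQrow' hμsum hker
  have hbij : Function.Bijective (of Q + vecMulVec 1 μ).mulVec :=
    ⟨mulVec_injective_iff_isUnit.2 hunit, mulVec_surjective_iff_isUnit.2 hunit⟩
  intro g hg
  refine (existsUnique_congr fun f => ?_).2 (hbij.existsUnique g)
  rw [← poisson_iff_mulVec_add_vecMulVec_eq (Q := of Q) (funext hμstat) hμsum hg, funext_iff]
  rfl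

theorem poisson_equation_well_posed
    {E : Type*} [Fintype E] [Nonempty E]
    (Q : E → E → ℝ)
    (hQoff : ∀ y₁ y₂, y₁ ≠ y₂ → 0 ≤ Q y₁ y₂)
    (hQrow : ∀ y₁, ∑ y₂, Q y₁ y₂ = 0)
    (μ : E → ℝ)
    (hμpos : ∀ y, 0 ≤ μ y)
    (hμsum : ∑ y, μ y = 1)
    (hμstat : ∀ y₂, ∑ y₁, μ y₁ * Q y₁ y₂ = 0)
    (hμuniq : ∀ μ' : E → ℝ, (∀ y, 0 ≤ μ' y) → (∑ y, μ' y = 1) →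
      (∀ y₂, ∑ y₁, μ' y₁ * Q y₁ y₂ = 0) → μ' = μ) :
    ∀ g : E → ℝ, (∑ y, μ y * g y = 0) →
      ∃! f : E → ℝ, (∀ y₁, ∑ y₂, Q y₁ y₂ * f y₂ = g y₁) ∧ ∑ y, μ y * f y = 0 :=
  poisson_equation_well_posed_general Q hQoff hQrow μ hμsum hμstat hμuniq
end

section
/- Let H be a real Hilbert space, D ⊆ H a linear subspace, and A : D → H a linear map which is dissipative with constant a > 0, i.e. ⟨A x, x⟩ ≤ −a‖x‖² for all x ∈ D. Let T > 0 and let g : ℝ → H → H satisfy: (i) ⟨g(t)(x₁) − g(t)(x₂), x₁ − x₂⟩ ≤ d·‖x₁ − x₂‖² for all t ∈ [0,T] and x₁, x₂ ∈ H, and (ii) ‖g(t)(0)‖ ≤ f₀ for all t ∈ [0,T], where d ∈ ℝ and f₀ ≥ 0. If X : ℝ → H is a curve with X(t) ∈ D for all t ∈ [0,T] and X has derivative A(X(t)) + g(t)(X(t)) at every t ∈ [0,T], then for all t ∈ [0,T]: ‖X(t)‖² ≤ exp(|1 + 2d − 2a|·T)·(‖X(0)‖² + f₀²·T). -/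
/-!
Along the trajectory, `d/dt ‖X‖² = 2 ⟪X, A X + g X⟫ ≤ (1 + 2d - 2a) ‖X‖² + f₀²`, by dissipativity
of `A`, the one-sided bound on `g t` applied against `0`, and Young's inequality
`2 ⟪g t 0, X⟫ ≤ ‖X‖² + f₀²` (the source of the `1`).
Grönwall's inequality bounds `‖X t‖²` by `gronwallBound (‖X 0‖²) K f₀² t` with
`K = |1 + 2d - 2a|`, which is monotone in `t` and at most `exp (K t) (‖X 0‖² + f₀² t)`.
-/

open RealInnerProductSpace Set

lemma two_inner_add_le_of_dissipative {E : Type*} [NormedAddCommGroup E] [InnerProductSpace ℝ E]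
    {x u v w : E} {a d f₀ : ℝ} (hu : ⟪u, x⟫ ≤ -a * ‖x‖ ^ 2) (hv : ⟪v - w, x⟫ ≤ d * ‖x‖ ^ 2)
    (hw : ‖w‖ ≤ f₀) :
    2 * ⟪x, u + v⟫ ≤ (1 + 2 * d - 2 * a) * ‖x‖ ^ 2 + f₀ ^ 2 := by
  have hyoung : 2 * ⟪w, x⟫ ≤ ‖x‖ ^ 2 + f₀ ^ 2 :=
    calc 2 * ⟪w, x⟫ ≤ 2 * (‖w‖ * ‖x‖) := by gcongr; exact real_inner_le_norm w x
      _ ≤ ‖x‖ ^ 2 + ‖w‖ ^ 2 := by linarith [two_mul_le_add_sq ‖w‖ ‖x‖]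
      _ ≤ ‖x‖ ^ 2 + f₀ ^ 2 := by gcongr
  have hsplit : ⟪x, u + v⟫ = ⟪u, x⟫ + ⟪v - w, x⟫ + ⟪w, x⟫ := by
    rw [real_inner_comm, inner_add_left, inner_sub_left]; ring
  rw [hsplit]
  linarith

lemma Real.exp_sub_one_le_mul_exp (y : ℝ) : Real.exp y - 1 ≤ y * Real.exp y := by
  have h := mul_le_mul_of_nonneg_right (Real.one_sub_le_exp_neg y) (Real.exp_pos y).le
  rw [← Real.exp_add, neg_add_cancel, Real.exp_zero] at h
  linarith

lemma gronwallBound_le_exp_mul_add {δ K ε : ℝ} (hK : 0 ≤ K) (hε : 0 ≤ ε) (x : ℝ) :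
    gronwallBound δ K ε x ≤ Real.exp (K * x) * (δ + ε * x) := by
  rcases hK.eq_or_lt with rfl | hK
  · simp [gronwallBound_K0]
  · rw [gronwallBound_of_K_ne_0 hK.ne']
    have h : ε / K * (Real.exp (K * x) - 1) ≤ ε / K * (K * x * Real.exp (K * x)) := by
      gcongr; exact Real.exp_sub_one_le_mul_exp _
    rw [show ε / K * (K * x * Real.exp (K * x)) = ε * x * Real.exp (K * x) by
      field_simp] at h
    linarith

theorem le_gronwallBound_of_hasDerivWithinAt_le {f : ℝ → ℝ} {δ K ε a b : ℝ}
    (hf : ContinuousOn f (Icc a b))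
    (hf' : ∀ x ∈ Ico a b, ∃ f', HasDerivWithinAt f f' (Ici x) x ∧ f' ≤ K * f x + ε)
    (ha : f a ≤ δ) : ∀ x ∈ Icc a b, f x ≤ gronwallBound δ K ε (x - a) :=
  le_gronwallBound_of_liminf_deriv_right_le (f' := fun x ↦ K * f x + ε) hf
    (fun x hx _ hr ↦ by
      obtain ⟨f', hderiv, hle⟩ := hf' x hx
      exact hderiv.liminf_right_slope_le (hle.trans_lt hr))
    ha (fun _ _ ↦ le_rfl)

theorem apriori_bound_general
    {H : Type*} [NormedAddCommGroup H] [InnerProductSpace ℝ H]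
    (D : Submodule ℝ H) (A : D →ₗ[ℝ] H)
    (a : ℝ)
    (hA : ∀ x : D, ⟪A x, (x : H)⟫ ≤ -a * ‖(x : H)‖ ^ 2)
    (T : ℝ)
    (g : ℝ → H → H) (d f₀ : ℝ)
    (hg : ∀ t ∈ Icc (0:ℝ) T, ∀ x₁ x₂ : H,
      ⟪g t x₁ - g t x₂, x₁ - x₂⟫ ≤ d * ‖x₁ - x₂‖ ^ 2)
    (hg0 : ∀ t ∈ Icc (0:ℝ) T, ‖g t 0‖ ≤ f₀)
    (X : ℝ → H)
    (hXD : ∀ t, ∀ _ : t ∈ Icc (0:ℝ) T, X t ∈ D)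
    (hXderiv : ∀ t, ∀ ht : t ∈ Icc (0:ℝ) T,
      HasDerivAt X (A ⟨X t, hXD t ht⟩ + g t (X t)) t) :
    ∀ t ∈ Icc (0:ℝ) T,
      ‖X t‖ ^ 2 ≤ Real.exp (|1 + 2 * d - 2 * a| * T) * (‖X 0‖ ^ 2 + f₀ ^ 2 * T) := by
  set K := |1 + 2 * d - 2 * a|
  have henergy : ∀ t (ht : t ∈ Icc (0:ℝ) T),
      2 * ⟪X t, A ⟨X t, hXD t ht⟩ + g t (X t)⟫ ≤ K * ‖X t‖ ^ 2 + f₀ ^ 2 := by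
    intro t ht
    have hgX := hg t ht (X t) 0
    simp only [sub_zero] at hgX
    calc _ ≤ (1 + 2 * d - 2 * a) * ‖X t‖ ^ 2 + f₀ ^ 2 :=
          two_inner_add_le_of_dissipative (hA _) hgX (hg0 t ht)
      _ ≤ K * ‖X t‖ ^ 2 + f₀ ^ 2 := by gcongr; exact le_abs_self _
  intro t ht
  calc ‖X t‖ ^ 2 ≤ gronwallBound (‖X 0‖ ^ 2) K (f₀ ^ 2) (t - 0) :=
        le_gronwallBound_of_hasDerivWithinAt_le
          (fun s hs ↦ (hXderiv s hs).norm_sq.continuousAt.continuousWithinAt)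
          (fun s hs ↦ ⟨_, (hXderiv s (Ico_subset_Icc_self hs)).norm_sq.hasDerivWithinAt,
            henergy s (Ico_subset_Icc_self hs)⟩)
          le_rfl t ht
    _ ≤ gronwallBound (‖X 0‖ ^ 2) K (f₀ ^ 2) T :=
        gronwallBound_mono (sq_nonneg _) (sq_nonneg _) (abs_nonneg _) (by linarith [ht.2])
    _ ≤ Real.exp (K * T) * (‖X 0‖ ^ 2 + f₀ ^ 2 * T) :=
        gronwallBound_le_exp_mul_add (abs_nonneg _) (sq_nonneg _) T

theorem apriori_bound
    {H : Type*} [NormedAddCommGroup H] [InnerProductSpace ℝ H] [CompleteSpace H]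
    (D : Submodule ℝ H) (A : D →ₗ[ℝ] H)
    (a : ℝ) (ha : 0 < a)
    (hA : ∀ x : D, ⟪A x, (x : H)⟫ ≤ -a * ‖(x : H)‖ ^ 2)
    (T : ℝ) (hT : 0 < T)
    (g : ℝ → H → H) (d f₀ : ℝ) (hf₀ : 0 ≤ f₀)
    (hg : ∀ t ∈ Icc (0:ℝ) T, ∀ x₁ x₂ : H,
      ⟪g t x₁ - g t x₂, x₁ - x₂⟫ ≤ d * ‖x₁ - x₂‖ ^ 2)
    (hg0 : ∀ t ∈ Icc (0:ℝ) T, ‖g t 0‖ ≤ f₀)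
    (X : ℝ → H)
    (hXD : ∀ t, ∀ _ : t ∈ Icc (0:ℝ) T, X t ∈ D)
    (hXderiv : ∀ t, ∀ ht : t ∈ Icc (0:ℝ) T,
      HasDerivAt X (A ⟨X t, hXD t ht⟩ + g t (X t)) t) :
    ∀ t ∈ Icc (0:ℝ) T,
      ‖X t‖ ^ 2 ≤ Real.exp (|1 + 2 * d - 2 * a| * T) * (‖X 0‖ ^ 2 + f₀ ^ 2 * T) :=
  apriori_bound_general D A a hA T g d f₀ hg hg0 X hXD hXderiv
end

section
/- Let H be a real Hilbert space, E a finite nonempty set, N ≥ 2 an integer, c : E → ℝ with 0 ≤ c(e) ≤ c₊, v : E → ℝ with |v(e)| ≤ v₊, and φ₁,…,φ_{N−1} ∈ H with ‖φᵢ‖ ≤ √(2N) for each i. Let ν : ℝ → (E → ℝ) be a family of probability vectors with 0 ≤ ν(ζ)(e) ≤ μ₊ for all ζ ∈ ℝ and e ∈ E. Define, for x ∈ H and y ∈ E^{N−1}, F^N(x, y) = (1/N)·Σ_{i=1}^{N−1} c(y(i))·(v(y(i)) − ⟨x, φᵢ⟩)·φᵢ and F̄^N(x) = (1/N)·Σ_{i=1}^{N−1}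 Σ_{e∈E} ν(⟨x,φᵢ⟩)(e)·c(e)·(v(e) − ⟨x, φᵢ⟩)·φᵢ. Then for every C > 0, every y ∈ E^{N−1}, and all x, z ∈ H with ‖x‖ ≤ C and ‖z‖ ≤ C: |⟨F^N(x, y) − F̄^N(x), x − z⟩| ≤ c₊·(v₊ + C·√(2N))·(1 + μ₊)·|E|·2C·√(2N). -/
/-! Writing `c(y(i)) v(y(i)) = Σₑ 1_{y(i) = e} c(e) v(e)`, the fluctuation `F^N(x, y) - F̄^N(x)` is
again a reaction term, with state weights `1_{y(i) = e} - ν(⟨x, φᵢ⟩)(e)` of size at most `1 + μ₊`.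
Bounding every factor of each of its `(N - 1)|E|` summands, the prefactor `1/N` absorbs the
number of channels. -/

open RealInnerProductSpace Finset

noncomputable def reactionTerm {H : Type*} [NormedAddCommGroup H] [InnerProductSpace ℝ H]
    {E : Type*} [Fintype E] (N : ℕ) (c v : E → ℝ) (φ : Fin (N - 1) → H)
    (x : H) (y : Fin (N - 1) → E) : H :=
  (1 / (N : ℝ)) • ∑ i, (c (y i) * (v (y i) - ⟪x, φ i⟫)) • φ i

noncomputable def averagedReactionTerm {H : Type*} [NormedAddCommGroup H]
    [InnerProductSpace ℝ H] {E : Type*} [Fintype E] (N : ℕ) (c v : E → ℝ)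
    (φ : Fin (N - 1) → H) (ν : ℝ → E → ℝ) (x : H) : H :=
  (1 / (N : ℝ)) • ∑ i, ∑ e, (ν ⟪x, φ i⟫ e * c e * (v e - ⟪x, φ i⟫)) • φ i

section WeightedReactionTerm

variable {H : Type*} [NormedAddCommGroup H] [InnerProductSpace ℝ H] {E : Type*} [Fintype E]
  {N : ℕ} {c v : E → ℝ} {φ : Fin (N - 1) → H} {x : H}

/-- The reaction term when channel `i` is in state `e` with weight `w i e`. -/
noncomputable def weightedReactionTerm (N : ℕ) (c v : E → ℝ) (φ : Fin (N - 1) → H)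
    (w : Fin (N - 1) → E → ℝ) (x : H) : H :=
  (1 / (N : ℝ)) • ∑ i, ∑ e, (w i e * c e * (v e - ⟪x, φ i⟫)) • φ i

theorem reactionTerm_eq_weightedReactionTerm [DecidableEq E] (y : Fin (N - 1) → E) :
    reactionTerm N c v φ x y =
      weightedReactionTerm N c v φ (fun i e => if y i = e then 1 else 0) x := by
  simp only [reactionTerm, weightedReactionTerm, ite_mul, one_mul, zero_mul, ite_smul,
    zero_smul, Fintype.sum_ite_eq]

theorem averagedReactionTerm_eq_weightedReactionTerm (ν : ℝ → E → ℝ) :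
    averagedReactionTerm N c v φ ν x = weightedReactionTerm N c v φ (fun i => ν ⟪x, φ i⟫) x :=
  rfl

theorem weightedReactionTerm_sub (w₁ w₂ : Fin (N - 1) → E → ℝ) :
    weightedReactionTerm N c v φ w₁ x - weightedReactionTerm N c v φ w₂ x =
      weightedReactionTerm N c v φ (w₁ - w₂) x := by
  simp only [weightedReactionTerm, ← smul_sub, ← sum_sub_distrib, ← sub_smul, Pi.sub_apply,
    sub_mul]

theorem abs_real_inner_le_of_norm_le {a b : ℝ} {x y : H} (hx : ‖x‖ ≤ a) (hy : ‖y‖ ≤ b) :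
    |⟪x, y⟫| ≤ a * b :=
  (abs_real_inner_le_norm x y).trans
    (mul_le_mul hx hy (norm_nonneg y) ((norm_nonneg x).trans hx))

theorem abs_inner_weightedReactionTerm_le {w : Fin (N - 1) → E → ℝ} {A cmax vmax R C : ℝ}
    (hw : ∀ i e, |w i e| ≤ A) (hc : ∀ e, |c e| ≤ cmax) (hv : ∀ e, |v e| ≤ vmax)
    (hφ : ∀ i, ‖φ i‖ ≤ R) (hx : ‖x‖ ≤ C) (u : H) :
    |⟪weightedReactionTerm N c v φ w x, u⟫|
      ≤ ((N - 1 : ℕ) / (N : ℝ)) * Fintype.card E * (A * cmax * (vmax + C * R) * (R * ‖u‖)) := by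
  have hterm : ∀ i e, |w i e * c e * (v e - ⟪x, φ i⟫) * ⟪φ i, u⟫|
      ≤ A * cmax * (vmax + C * R) * (R * ‖u‖) := by
    intro i e
    have hdrive : |v e - ⟪x, φ i⟫| ≤ vmax + C * R :=
      (abs_sub _ _).trans (add_le_add (hv e) (abs_real_inner_le_of_norm_le hx (hφ i)))
    have hA : 0 ≤ A := (abs_nonneg _).trans (hw i e)
    have hcmax : 0 ≤ cmax := (abs_nonneg _).trans (hc e)
    have hdrive_nonneg : 0 ≤ vmax + C * R := (abs_nonneg _).trans hdrive
    simp only [abs_mul]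
    gcongr
    exacts [hw i e, hc e, abs_real_inner_le_of_norm_le (hφ i) le_rfl]
  calc |⟪weightedReactionTerm N c v φ w x, u⟫|
      = 1 / N * |∑ i, ∑ e, w i e * c e * (v e - ⟪x, φ i⟫) * ⟪φ i, u⟫| := by
        simp only [weightedReactionTerm, real_inner_smul_left, sum_inner, abs_mul,
          abs_of_nonneg (by positivity : (0 : ℝ) ≤ 1 / N)]
    _ ≤ 1 / N * ∑ _i : Fin (N - 1), ∑ _e : E, A * cmax * (vmax + C * R) * (R * ‖u‖) := by
        gcongr
        exact (abs_sum_le_sum_abs _ _).trans (sum_le_sum fun i _ =>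
          (abs_sum_le_sum_abs _ _).trans (sum_le_sum fun e _ => hterm i e))
    _ = _ := by simp only [sum_const, card_univ, Fintype.card_fin, nsmul_eq_mul]; ring

end WeightedReactionTerm

theorem abs_ite_one_zero_sub_le {p : Prop} [Decidable p] {q μ : ℝ} (hq : 0 ≤ q) (hqμ : q ≤ μ) :
    |(if p then 1 else 0) - q| ≤ 1 + μ := by
  split_ifs <;> rw [abs_le] <;> constructor <;> linarith

theorem Phi_bound_O_N_general
    {H : Type*} [NormedAddCommGroup H] [InnerProductSpace ℝ H]
    {E : Type*} [Fintype E]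
    (N : ℕ)
    (c : E → ℝ) (cpos : ℝ) (hc : ∀ e, 0 ≤ c e ∧ c e ≤ cpos)
    (v : E → ℝ) (vpos : ℝ) (hv : ∀ e, |v e| ≤ vpos)
    (φ : Fin (N - 1) → H) (hφ : ∀ i, ‖φ i‖ ≤ Real.sqrt (2 * N))
    (ν : ℝ → E → ℝ) (mupos : ℝ)
    (hν : ∀ (ζ : ℝ) (e : E), 0 ≤ ν ζ e ∧ ν ζ e ≤ mupos)
    (C : ℝ)
    (y : Fin (N - 1) → E) (x z : H) (hx : ‖x‖ ≤ C) (hz : ‖z‖ ≤ C) :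
    |⟪reactionTerm N c v φ x y - averagedReactionTerm N c v φ ν x, x - z⟫|
      ≤ cpos * (vpos + C * Real.sqrt (2 * N)) * (1 + mupos) * (Fintype.card E) * (2 * C)
        * Real.sqrt (2 * N) := by
  classical
  rw [reactionTerm_eq_weightedReactionTerm, averagedReactionTerm_eq_weightedReactionTerm,
    weightedReactionTerm_sub]
  refine (abs_inner_weightedReactionTerm_le (A := 1 + mupos)
    (fun i e => abs_ite_one_zero_sub_le (hν ⟪x, φ i⟫ e).1 (hν ⟪x, φ i⟫ e).2)
    (fun e => (abs_of_nonneg (hc e).1).trans_le (hc e).2) hv hφ hx (x - z)).trans ?_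
  rcases isEmpty_or_nonempty E with _ | ⟨⟨e⟩⟩
  · simp
  have hcpos : 0 ≤ cpos := (hc e).1.trans (hc e).2
  have hvpos : 0 ≤ vpos := (abs_nonneg _).trans (hv e)
  have hmupos : 0 ≤ mupos := (hν 0 e).1.trans (hν 0 e).2
  have hC : 0 ≤ C := (norm_nonneg x).trans hx
  have hxz : ‖x - z‖ ≤ 2 * C := (norm_sub_le x z).trans (by linarith)
  have hratio : ((N - 1 : ℕ) : ℝ) / N ≤ 1 :=
    div_le_one_of_le₀ (by exact_mod_cast N.sub_le 1) (by positivity)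
  calc ((N - 1 : ℕ) / (N : ℝ)) * Fintype.card E
        * ((1 + mupos) * cpos * (vpos + C * Real.sqrt (2 * N)) * (Real.sqrt (2 * N) * ‖x - z‖))
      ≤ 1 * Fintype.card E
        * ((1 + mupos) * cpos * (vpos + C * Real.sqrt (2 * N)) * (Real.sqrt (2 * N) * (2 * C))) := by
        gcongr
    _ = _ := by ring

theorem Phi_bound_O_N
    {H : Type*} [NormedAddCommGroup H] [InnerProductSpace ℝ H] [CompleteSpace H]
    {E : Type*} [Fintype E] [Nonempty E]
    (N : ℕ) (hN : 2 ≤ N)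
    (c : E → ℝ) (cpos : ℝ) (hc : ∀ e, 0 ≤ c e ∧ c e ≤ cpos)
    (v : E → ℝ) (vpos : ℝ) (hv : ∀ e, |v e| ≤ vpos)
    (φ : Fin (N - 1) → H) (hφ : ∀ i, ‖φ i‖ ≤ Real.sqrt (2 * N))
    (ν : ℝ → E → ℝ) (mupos : ℝ)
    (hν : ∀ (ζ : ℝ) (e : E), 0 ≤ ν ζ e ∧ ν ζ e ≤ mupos)
    (hνprob : ∀ ζ : ℝ, ∑ e, ν ζ e = 1)
    (C : ℝ) (hC : 0 < C)
    (y : Fin (N - 1) → E) (x z : H) (hx : ‖x‖ ≤ C) (hz : ‖z‖ ≤ C) :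
    |⟪reactionTerm N c v φ x y - averagedReactionTerm N c v φ ν x, x - z⟫|
      ≤ cpos * (vpos + C * Real.sqrt (2 * N)) * (1 + mupos) * (Fintype.card E) * (2 * C)
        * Real.sqrt (2 * N) :=
  Phi_bound_O_N_general N c cpos hc v vpos hv φ hφ ν mupos hν C y x z hx hz
end

section
/- Let H be a real Hilbert space, E a finite nonempty set, N ≥ 2 an integer, c : E → ℝ, v : E → ℝ, and φ₁,…,φ_{N−1} ∈ H. Let ν : ℝ → (E → ℝ) be such that for each e ∈ E the map ζ ↦ ν(ζ)(e) is differentiable with derivative ν'(ζ)(e). Fix y ∈ E^{N−1} and z ∈ H, and define Φ(x) = ⟨F^N(x, y) − F̄^N(x), x − z⟩ where F^N(x, y) = (1/N)·Σ_{i=1}^{N−1} c(y(i))·(v(y(i)) − ⟨x, φᵢ⟩)·φᵢ and F̄^N(x) = (1/N)·Σ_{i=1}^{N−1} Σ_{e∈E} ν(⟨x,φᵢ⟩)(e)·c(e)·(v(e) − ⟨x, φᵢ⟩)·φᵢ. Then Φ is Fréchet differentiable at every x ∈ H, and its derivative is the continuous linear functional h ↦ ⟨D(x), h⟩, where D(x)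 = −(1/N)·Σ_{i=1}^{N−1} Σ_{e∈E} c(e)·(1_{{e}}(y(i)) − ν(⟨x,φᵢ⟩)(e))·⟨φᵢ, x − z⟩·φᵢ − (1/N)·Σ_{i=1}^{N−1} Σ_{e∈E} c(e)·(v(e) − ⟨x,φᵢ⟩)·ν'(⟨x,φᵢ⟩)(e)·⟨φᵢ, x − z⟩·φᵢ + (1/N)·Σ_{i=1}^{N−1} Σ_{e∈E} c(e)·(v(e) − ⟨x,φᵢ⟩)·(1_{{e}}(y(i)) − ν(⟨x,φᵢ⟩)(e))·φᵢ, and 1_{{e}}(y(i)) equals 1 if y(i) = e and 0 otherwise. -/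
open RealInnerProductSpace Finset

/-- The representation `D(x)` in `H` of the Fréchet derivative of
`x ↦ ⟨F^N(x,y) − F̄^N(x), x − z⟩`. -/
noncomputable def derivRepresentation {H : Type*} [NormedAddCommGroup H]
    [InnerProductSpace ℝ H] {E : Type*} [Fintype E] [DecidableEq E]
    (N : ℕ) (c v : E → ℝ) (φ : Fin (N - 1) → H) (ν ν' : ℝ → E → ℝ)
    (y : Fin (N - 1) → E) (z x : H) : H :=
  -((1 / (N : ℝ)) • ∑ i, ∑ e,
      (c e * ((if y i = e then (1:ℝ) else 0) - ν ⟪x, φ i⟫ e) * ⟪φ i, x - z⟫) • φ i)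
  - (1 / (N : ℝ)) • ∑ i, ∑ e,
      (c e * (v e - ⟪x, φ i⟫) * ν' ⟪x, φ i⟫ e * ⟪φ i, x - z⟫) • φ i
  + (1 / (N : ℝ)) • ∑ i, ∑ e,
      (c e * (v e - ⟪x, φ i⟫) * ((if y i = e then (1:ℝ) else 0) - ν ⟪x, φ i⟫ e)) • φ i

/-
`Φ` is a sum of ridge functions `x ↦ fᵢ(⟨x, φᵢ⟩) ⟨φᵢ, x − z⟩`, where `fᵢ(ζ)` is the deviation
of the reaction of channel state `y i` at potential `ζ` from its `ν(ζ)`-average. By the product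
and chain rules such a function has gradient `(fᵢ'(⟨x, φᵢ⟩) ⟨φᵢ, x − z⟩ + fᵢ(⟨x, φᵢ⟩)) φᵢ`, and
summing these gradients gives `D(x)`.
-/

theorem hasFDerivAt_comp_inner_mul_inner_sub {H : Type*} [NormedAddCommGroup H]
    [InnerProductSpace ℝ H] {f : ℝ → ℝ} {f' : ℝ} (u z x : H) (hf : HasDerivAt f f' ⟪x, u⟫) :
    HasFDerivAt (fun x' : H => f ⟪x', u⟫ * ⟪u, x' - z⟫)
      (innerSL ℝ ((f' * ⟪u, x - z⟫ + f ⟪x, u⟫) • u)) x := by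
  have hinner : HasFDerivAt (fun x' : H => ⟪x', u⟫) (innerSL ℝ u) x :=
    (funext fun x' => real_inner_comm u x' : (fun x' : H => ⟪x', u⟫) = innerSL ℝ u) ▸
      (innerSL ℝ u).hasFDerivAt
  have hshift : HasFDerivAt (fun x' : H => ⟪u, x' - z⟫) (innerSL ℝ u) x :=
    (innerSL ℝ u).hasFDerivAt.comp x ((hasFDerivAt_id x).sub_const z)
  refine ((hf.comp_hasFDerivAt x hinner).mul hshift).congr_fderiv ?_
  ext h
  simp only [add_apply, smul_apply, innerSL_apply_apply,
    real_inner_smul_left, smul_eq_mul, Function.comp_apply]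
  ring

section Reaction

variable {E : Type*} [Fintype E] [DecidableEq E] (c v : E → ℝ) (ν ν' : ℝ → E → ℝ)

noncomputable def reactionDeviation (a : E) (ζ : ℝ) : ℝ :=
  ∑ e, c e * ((if a = e then (1:ℝ) else 0) - ν ζ e) * (v e - ζ)

noncomputable def reactionDeviationDeriv (a : E) (ζ : ℝ) : ℝ :=
  ∑ e, -(c e * ((if a = e then (1:ℝ) else 0) - ν ζ e) + c e * (v e - ζ) * ν' ζ e)

theorem reactionDeviation_eq (a : E) (ζ : ℝ) :
    reactionDeviation c v ν a ζ = c a * (v a - ζ) - ∑ e, ν ζ e * c e * (v e - ζ) := by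
  calc reactionDeviation c v ν a ζ
      = ∑ e, ((if a = e then c e * (v e - ζ) else 0) - ν ζ e * c e * (v e - ζ)) :=
        sum_congr rfl fun e _ => by split_ifs <;> ring
    _ = _ := by rw [sum_sub_distrib, sum_ite_eq, if_pos (mem_univ a)]

theorem hasDerivAt_reactionDeviation (hν : ∀ e ζ, HasDerivAt (fun ζ' => ν ζ' e) (ν' ζ e) ζ)
    (a : E) (ζ : ℝ) :
    HasDerivAt (reactionDeviation c v ν a) (reactionDeviationDeriv c v ν ν' a ζ) ζ :=
  HasDerivAt.fun_sum fun e _ =>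
    ((((hν e ζ).const_sub (if a = e then (1:ℝ) else 0)).const_mul (c e)).mul
      ((hasDerivAt_id' ζ).const_sub (v e))).congr_deriv (by ring)

variable {H : Type*} [NormedAddCommGroup H] [InnerProductSpace ℝ H] (N : ℕ)
  (φ : Fin (N - 1) → H) (y : Fin (N - 1) → E) (z x : H)

theorem inner_reactionTerm_sub_averagedReactionTerm :
    ⟪reactionTerm N c v φ x y - averagedReactionTerm N c v φ ν x, x - z⟫
      = (1 / (N : ℝ)) * ∑ i, reactionDeviation c v ν (y i) ⟪x, φ i⟫ * ⟪φ i, x - z⟫ := by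
  simp only [reactionTerm, averagedReactionTerm, reactionDeviation_eq, ← smul_sub,
    ← sum_sub_distrib, ← sum_smul, ← sub_smul, real_inner_smul_left, sum_inner]

theorem derivRepresentation_eq :
    derivRepresentation N c v φ ν ν' y z x = (1 / (N : ℝ)) • ∑ i,
      (reactionDeviationDeriv c v ν ν' (y i) ⟪x, φ i⟫ * ⟪φ i, x - z⟫
        + reactionDeviation c v ν (y i) ⟪x, φ i⟫) • φ i := by
  rw [derivRepresentation, ← smul_neg, ← smul_sub, ← smul_add]
  congr 1
  simp only [reactionDeviation, reactionDeviationDeriv, sum_mul, ← sum_add_distrib, sum_smul,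
    ← sum_neg_distrib, ← sum_sub_distrib, ← neg_smul, ← sub_smul, ← add_smul]
  exact sum_congr rfl fun i _ => sum_congr rfl fun e _ => by congr 1; ring

end Reaction

theorem Phi_frechet_differentiable_general
    {H : Type*} [NormedAddCommGroup H] [InnerProductSpace ℝ H]
    {E : Type*} [Fintype E] [DecidableEq E]
    (N : ℕ)
    (c v : E → ℝ) (φ : Fin (N - 1) → H)
    (ν ν' : ℝ → E → ℝ)
    (hν : ∀ (e : E) (ζ : ℝ), HasDerivAt (fun ζ' => ν ζ' e) (ν' ζ e) ζ)
    (y : Fin (N - 1) → E) (z : H) (x : H) :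
    HasFDerivAt
      (fun x' : H =>
        ⟪reactionTerm N c v φ x' y - averagedReactionTerm N c v φ ν x', x' - z⟫)
      (innerSL ℝ (derivRepresentation N c v φ ν ν' y z x)) x := by
  simp only [inner_reactionTerm_sub_averagedReactionTerm]
  rw [derivRepresentation_eq, map_smul, map_sum]
  exact (HasFDerivAt.fun_sum fun i _ => hasFDerivAt_comp_inner_mul_inner_sub (φ i) z x
    (hasDerivAt_reactionDeviation c v ν ν' hν (y i) _)).const_mul _

theorem Phi_frechet_differentiable
    {H : Type*} [NormedAddCommGroup H] [InnerProductSpace ℝ H] [CompleteSpace H]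
    {E : Type*} [Fintype E] [Nonempty E] [DecidableEq E]
    (N : ℕ) (hN : 2 ≤ N)
    (c v : E → ℝ) (φ : Fin (N - 1) → H)
    (ν ν' : ℝ → E → ℝ)
    (hν : ∀ (e : E) (ζ : ℝ), HasDerivAt (fun ζ' => ν ζ' e) (ν' ζ e) ζ)
    (y : Fin (N - 1) → E) (z : H) (x : H) :
    HasFDerivAt
      (fun x' : H =>
        ⟪reactionTerm N c v φ x' y - averagedReactionTerm N c v φ ν x', x' - z⟫)
      (innerSL ℝ (derivRepresentation N c v φ ν ν' y z x)) x :=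
  Phi_frechet_differentiable_general N c v φ ν ν' hν y z x
end
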